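/- arXiv:2502.10371 — 4 statements merged into one kernel-verified Lean document; each statement's English description precedes it below -/
import Mathlib

section
/- Let S : [0,T] → ℂ^(M×N) be a continuous matrix-valued function with pointwise singular value decomposition S(t) = U_t Σ_t V_tᴴ, and define G_rx = ∫₀ᵀ U_t Σ_t U_tᴴ dt and G_tx = ∫₀ᵀ V_t Σ_t V_tᴴ dt. Then for all vectors c ∈ ℂ^M and w ∈ ℂ^N, we have ∫₀ᵀ |cᴴ S(t) w| dt ≤ √(cᴴ G_rx c) · √(wᴴ G_tx w). -/
/-!
Writing `a = U_tᴴ c` and `b = V_tᴴ w`, the integrand is `|∑ₚ σₚ conj(aₚ) bₚ|`, which the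
Cauchy–Schwarz inequality with weights `σₚ ≥ 0` bounds by `√(cᴴ U_t Σ_t U_tᴴ c) · √(wᴴ V_t Σ_t V_tᴴ w)`.
Cauchy–Schwarz for the integral in `t` then bounds the integral of this product by the product of
the square roots of the integrated quadratic forms, which are the quadratic forms of `G_rx` and
`G_tx`.
-/

open Matrix MeasureTheory

namespace Matrix

variable {m n r : Type*} [Fintype m] [Fintype n] [Fintype r] [DecidableEq r]

theorem star_dotProduct_mul_diagonal_mul_conjTranspose_mulVec {α : Type*} [CommSemiring α]
    [StarRing α] (X : Matrix m r α) (Y : Matrix n r α) (d : r → α) (x : m → α) (y : n → α) :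
    star x ⬝ᵥ (X * diagonal d * Yᴴ) *ᵥ y = star (Xᴴ *ᵥ x) ⬝ᵥ diagonal d *ᵥ (Yᴴ *ᵥ y) := by
  rw [← mulVec_mulVec, ← mulVec_mulVec, dotProduct_mulVec, star_mulVec,
    conjTranspose_conjTranspose]

variable {𝕜 : Type*} [RCLike 𝕜]

theorem re_star_dotProduct_diagonal_mulVec_self (d : r → ℝ) (a : r → 𝕜) :
    RCLike.re (star a ⬝ᵥ diagonal (fun p => (d p : 𝕜)) *ᵥ a) = ∑ p, d p * ‖a p‖ ^ 2 := by
  simp only [mulVec_diagonal, dotProduct, Pi.star_apply, map_sum]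
  refine Finset.sum_congr rfl fun p _ => ?_
  rw [mul_left_comm, RCLike.star_def, RCLike.conj_mul, ← RCLike.ofReal_pow, ← RCLike.ofReal_mul,
    RCLike.ofReal_re]

theorem norm_star_dotProduct_diagonal_mulVec_le {d : r → ℝ} (hd : 0 ≤ d) (a b : r → 𝕜) :
    ‖star a ⬝ᵥ diagonal (fun p => (d p : 𝕜)) *ᵥ b‖ ≤
      √(RCLike.re (star a ⬝ᵥ diagonal (fun p => (d p : 𝕜)) *ᵥ a)) *
        √(RCLike.re (star b ⬝ᵥ diagonal (fun p => (d p : 𝕜)) *ᵥ b)) := by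
  rw [re_star_dotProduct_diagonal_mulVec_self, re_star_dotProduct_diagonal_mulVec_self]
  calc ‖star a ⬝ᵥ diagonal (fun p => (d p : 𝕜)) *ᵥ b‖
      ≤ ∑ p, ‖star (a p) * (d p * b p)‖ := by
        simpa only [mulVec_diagonal, dotProduct, Pi.star_apply] using norm_sum_le _ _
    _ = ∑ p, √(d p * ‖a p‖ ^ 2) * √(d p * ‖b p‖ ^ 2) := by
        refine Finset.sum_congr rfl fun p _ => ?_
        rw [Real.sqrt_mul (hd p), Real.sqrt_mul (hd p), Real.sqrt_sq (norm_nonneg _),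
          Real.sqrt_sq (norm_nonneg _), mul_mul_mul_comm, Real.mul_self_sqrt (hd p), norm_mul,
          norm_mul, norm_star, RCLike.norm_ofReal, abs_of_nonneg (hd p)]
        ring
    _ ≤ √(∑ p, d p * ‖a p‖ ^ 2) * √(∑ p, d p * ‖b p‖ ^ 2) :=
        Real.sum_sqrt_mul_sqrt_le _ (fun p => mul_nonneg (hd p) (sq_nonneg _))
          (fun p => mul_nonneg (hd p) (sq_nonneg _))

theorem norm_star_dotProduct_mul_diagonal_mul_conjTranspose_mulVec_le {d : r → ℝ} (hd : 0 ≤ d)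
    (X : Matrix m r 𝕜) (Y : Matrix n r 𝕜) (x : m → 𝕜) (y : n → 𝕜) :
    ‖star x ⬝ᵥ (X * diagonal (fun p => (d p : 𝕜)) * Yᴴ) *ᵥ y‖ ≤
      √(RCLike.re (star x ⬝ᵥ (X * diagonal (fun p => (d p : 𝕜)) * Xᴴ) *ᵥ x)) *
        √(RCLike.re (star y ⬝ᵥ (Y * diagonal (fun p => (d p : 𝕜)) * Yᴴ) *ᵥ y)) := by
  simp only [star_dotProduct_mul_diagonal_mul_conjTranspose_mulVec]
  exact norm_star_dotProduct_diagonal_mulVec_le hd _ _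

open scoped ComplexOrder in
theorem re_star_dotProduct_mul_diagonal_mul_conjTranspose_mulVec_self_nonneg {d : r → ℝ}
    (hd : 0 ≤ d) (X : Matrix m r 𝕜) (x : m → 𝕜) :
    0 ≤ RCLike.re (star x ⬝ᵥ (X * diagonal (fun p => (d p : 𝕜)) * Xᴴ) *ᵥ x) :=
  (RCLike.nonneg_iff.1 <|
    ((posSemidef_diagonal_iff.2 fun p => RCLike.ofReal_nonneg.2 (hd p)).mul_mul_conjTranspose_same
      X).dotProduct_mulVec_nonneg x).1

theorem dotProduct_mulVec_eq_intervalIntegral {A : ℝ → Matrix m n 𝕜} {G : Matrix m n 𝕜}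
    {a b : ℝ} {μ : Measure ℝ} (hA : ∀ i j, IntervalIntegrable (fun t => A t i j) μ a b)
    (hG : ∀ i j, G i j = ∫ t in a..b, A t i j ∂μ) (x : m → 𝕜) (y : n → 𝕜) :
    x ⬝ᵥ G *ᵥ y = ∫ t in a..b, x ⬝ᵥ A t *ᵥ y ∂μ := by
  simp only [dotProduct, mulVec, hG, Finset.mul_sum]
  rw [intervalIntegral.integral_finsetSum (f := fun i t => ∑ j, x i * (A t i j * y j)) fun i _ =>
    by simpa only [Finset.sum_fn] using
      IntervalIntegrable.sum _ fun j _ => ((hA i j).mul_const (y j)).const_mul (x i)]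
  refine Finset.sum_congr rfl fun i _ => ?_
  rw [intervalIntegral.integral_finsetSum (f := fun j t => x i * (A t i j * y j))
    fun j _ => ((hA i j).mul_const _).const_mul _]
  refine Finset.sum_congr rfl fun j _ => ?_
  rw [intervalIntegral.integral_const_mul, intervalIntegral.integral_mul_const]

theorem re_dotProduct_mulVec_eq_intervalIntegral {A : ℝ → Matrix m n 𝕜} {G : Matrix m n 𝕜}
    {a b : ℝ} (hA : Continuous A) (hG : ∀ i j, G i j = ∫ t in a..b, A t i j)
    (x : m → 𝕜) (y : n → 𝕜) :
    RCLike.re (x ⬝ᵥ G *ᵥ y) = ∫ t in a..b, RCLike.re (x ⬝ᵥ A t *ᵥ y) := by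
  rw [dotProduct_mulVec_eq_intervalIntegral (fun i j => Continuous.intervalIntegrable
    ((continuous_apply j).comp ((continuous_apply i).comp hA)) _ _) hG]
  exact (intervalIntegral.intervalIntegral_re
    ((continuous_const.dotProduct (hA.matrix_mulVec continuous_const)).intervalIntegrable _ _)).symm

end Matrix

theorem MeasureTheory.integral_sqrt_mul_sqrt_le {α : Type*} [MeasurableSpace α] {μ : Measure α}
    {f g : α → ℝ} (hf : 0 ≤ᵐ[μ] f) (hg : 0 ≤ᵐ[μ] g) (hfi : Integrable f μ)
    (hgi : Integrable g μ) :
    ∫ x, √(f x) * √(g x) ∂μ ≤ √(∫ x, f x ∂μ) * √(∫ x, g x ∂μ) := by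
  have sq_sqrt_ae {h : α → ℝ} (hh : 0 ≤ᵐ[μ] h) : (fun x => √(h x) ^ (2 : ℝ)) =ᵐ[μ] h := by
    filter_upwards [hh] with x hx
    rw [Real.rpow_two, Real.sq_sqrt hx]
  have memLp_sqrt {h : α → ℝ} (hh : 0 ≤ᵐ[μ] h) (hhi : Integrable h μ) :
      MemLp (fun x => √(h x)) (ENNReal.ofReal 2) μ := by
    rw [ENNReal.ofReal_ofNat,
      memLp_two_iff_integrable_sq (Real.continuous_sqrt.comp_aestronglyMeasurable hhi.1)]
    refine hhi.congr ?_
    filter_upwards [hh] with x hx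
    rw [Real.sq_sqrt hx]
  have holder := integral_mul_le_Lp_mul_Lq_of_nonneg Real.HolderConjugate.two_two
    (Filter.Eventually.of_forall fun x => Real.sqrt_nonneg (f x))
    (Filter.Eventually.of_forall fun x => Real.sqrt_nonneg (g x))
    (memLp_sqrt hf hfi) (memLp_sqrt hg hgi)
  rwa [integral_congr_ae (sq_sqrt_ae hf), integral_congr_ae (sq_sqrt_ae hg),
    ← Real.sqrt_eq_rpow, ← Real.sqrt_eq_rpow] at holder

theorem intervalIntegral.integral_sqrt_mul_sqrt_le {a b : ℝ} {μ : Measure ℝ} {f g : ℝ → ℝ}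
    (hab : a ≤ b) (hf : ∀ x, 0 ≤ f x) (hg : ∀ x, 0 ≤ g x) (hfi : IntervalIntegrable f μ a b)
    (hgi : IntervalIntegrable g μ a b) :
    ∫ x in a..b, √(f x) * √(g x) ∂μ ≤ √(∫ x in a..b, f x ∂μ) * √(∫ x in a..b, g x ∂μ) := by
  simp only [intervalIntegral.integral_of_le hab]
  exact MeasureTheory.integral_sqrt_mul_sqrt_le (Filter.Eventually.of_forall hf)
    (Filter.Eventually.of_forall hg) hfi.1 hgi.1

theorem integral_split_bound_general (M N r : ℕ) (T : ℝ) (hT : 0 < T)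
    (S : ℝ → Matrix (Fin M) (Fin N) ℂ)
    (U : ℝ → Matrix (Fin M) (Fin r) ℂ)
    (V : ℝ → Matrix (Fin N) (Fin r) ℂ)
    (σ : ℝ → Fin r → ℝ)
    (hScont : Continuous S)
    (hUcont : Continuous U)
    (hVcont : Continuous V)
    (hσcont : Continuous σ)
    (hσ : ∀ t p, 0 ≤ σ t p)
    (hSVD : ∀ t, S t = U t * Matrix.diagonal (fun p => (σ t p : ℂ)) * (V t)ᴴ)
    (Grx : Matrix (Fin M) (Fin M) ℂ)
    (Gtx : Matrix (Fin N) (Fin N) ℂ)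
    (hGrx : ∀ i j, Grx i j =
      ∫ t in (0:ℝ)..T, (U t * Matrix.diagonal (fun p => (σ t p : ℂ)) * (U t)ᴴ) i j)
    (hGtx : ∀ i j, Gtx i j =
      ∫ t in (0:ℝ)..T, (V t * Matrix.diagonal (fun p => (σ t p : ℂ)) * (V t)ᴴ) i j)
    (c : Fin M → ℂ) (w : Fin N → ℂ) :
    (∫ t in (0:ℝ)..T, ‖star c ⬝ᵥ (S t).mulVec w‖) ≤
      Real.sqrt ((star c ⬝ᵥ Grx.mulVec c).re) *
        Real.sqrt ((star w ⬝ᵥ Gtx.mulVec w).re) := by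
  set D : ℝ → Matrix (Fin r) (Fin r) ℂ := fun t => diagonal fun p => (σ t p : ℂ)
  have hD : Continuous D := Continuous.matrix_diagonal <|
    continuous_pi fun p => Complex.continuous_ofReal.comp ((continuous_apply p).comp hσcont)
  have hconj {k : ℕ} {W : ℝ → Matrix (Fin k) (Fin r) ℂ} (hW : Continuous W) :
      Continuous fun t => W t * D t * (W t)ᴴ :=
    (hW.matrix_mul hD).matrix_mul hW.matrix_conjTranspose
  have hquad {k : ℕ} {W : ℝ → Matrix (Fin k) (Fin r) ℂ} (hW : Continuous W) (x : Fin k → ℂ) :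
      Continuous fun t => (star x ⬝ᵥ (W t * D t * (W t)ᴴ) *ᵥ x).re :=
    Complex.continuous_re.comp
      (continuous_const.dotProduct ((hconj hW).matrix_mulVec continuous_const))
  calc (∫ t in (0:ℝ)..T, ‖star c ⬝ᵥ (S t).mulVec w‖)
      ≤ ∫ t in (0:ℝ)..T, √(star c ⬝ᵥ (U t * D t * (U t)ᴴ) *ᵥ c).re *
          √(star w ⬝ᵥ (V t * D t * (V t)ᴴ) *ᵥ w).re :=
        intervalIntegral.integral_mono_on hT.le
          ((continuous_const.dotProduct
            (hScont.matrix_mulVec continuous_const)).norm.intervalIntegrable _ _)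
          (((hquad hUcont c).sqrt.mul (hquad hVcont w).sqrt).intervalIntegrable _ _)
          fun t _ => hSVD t ▸
            norm_star_dotProduct_mul_diagonal_mul_conjTranspose_mulVec_le (hσ t) _ _ _ _
    _ ≤ √(∫ t in (0:ℝ)..T, (star c ⬝ᵥ (U t * D t * (U t)ᴴ) *ᵥ c).re) *
          √(∫ t in (0:ℝ)..T, (star w ⬝ᵥ (V t * D t * (V t)ᴴ) *ᵥ w).re) :=
        intervalIntegral.integral_sqrt_mul_sqrt_le hT.le
          (fun t => re_star_dotProduct_mul_diagonal_mul_conjTranspose_mulVec_self_nonneg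
            (hσ t) (U t) c)
          (fun t => re_star_dotProduct_mul_diagonal_mul_conjTranspose_mulVec_self_nonneg
            (hσ t) (V t) w)
          ((hquad hUcont c).intervalIntegrable _ _) ((hquad hVcont w).intervalIntegrable _ _)
    _ = _ := congr_arg₂ (fun x y => √x * √y)
        (re_dotProduct_mulVec_eq_intervalIntegral (hconj hUcont) hGrx (star c) c).symm
        (re_dotProduct_mulVec_eq_intervalIntegral (hconj hVcont) hGtx (star w) w).symm

/-- Integral split bound: the beamformed self-interference integral is bounded by
the TX/RX quadratic forms of the integral-split matrices. -/
theorem integral_split_bound (M N r : ℕ) (hM : 0 < M) (hN : 0 < N) (T : ℝ) (hT : 0 < T)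
    (S : ℝ → Matrix (Fin M) (Fin N) ℂ)
    (U : ℝ → Matrix (Fin M) (Fin r) ℂ)
    (V : ℝ → Matrix (Fin N) (Fin r) ℂ)
    (σ : ℝ → Fin r → ℝ)
    (hScont : Continuous S)
    (hUcont : Continuous U)
    (hVcont : Continuous V)
    (hσcont : Continuous σ)
    (hσ : ∀ t p, 0 ≤ σ t p)
    (hU : ∀ t, (U t)ᴴ * U t = 1)
    (hV : ∀ t, (V t)ᴴ * V t = 1)
    (hSVD : ∀ t, S t = U t * Matrix.diagonal (fun p => (σ t p : ℂ)) * (V t)ᴴ)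
    (Grx : Matrix (Fin M) (Fin M) ℂ)
    (Gtx : Matrix (Fin N) (Fin N) ℂ)
    (hGrx : ∀ i j, Grx i j =
      ∫ t in (0:ℝ)..T, (U t * Matrix.diagonal (fun p => (σ t p : ℂ)) * (U t)ᴴ) i j)
    (hGtx : ∀ i j, Gtx i j =
      ∫ t in (0:ℝ)..T, (V t * Matrix.diagonal (fun p => (σ t p : ℂ)) * (V t)ᴴ) i j)
    (c : Fin M → ℂ) (w : Fin N → ℂ) :
    (∫ t in (0:ℝ)..T, ‖star c ⬝ᵥ (S t).mulVec w‖) ≤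
      Real.sqrt ((star c ⬝ᵥ Grx.mulVec c).re) *
        Real.sqrt ((star w ⬝ᵥ Gtx.mulVec w).re) :=
  integral_split_bound_general M N r T hT S U V σ hScont hUcont hVcont hσcont hσ hSVD Grx Gtx hGrx
    hGtx c w
end

section
/- Let G ∈ ℂ^(P×P) be positive semidefinite Hermitian with spectral decomposition G = Q Γ Qᴴ (Q unitary, Γ diagonal with entries σ_p ≥ 0), let r ∈ ℂ^P with ‖r‖₂ = 1, and let ν > 0. Define ž = Q (Γ + ν I)⁻¹ Qᴴ r and z = ž / ‖ž‖₂. If ν satisfies Σ_p (σ_p − ε)|q_pᴴ r|² / (σ_p + ν)² = 0, then z satisfies zᴴ G z = ε. -/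
open Matrix ComplexOrder

/-! In the eigenbasis of `G` the vector `ž` has coordinates `u_p = q_pᴴ r / (σ_p + ν)`, so
`‖ž‖² = Σ |u_p|²` and `žᴴ G ž = Σ σ_p |u_p|²`. The root equation for `ν` says precisely
`Σ (σ_p - ε) |u_p|² = 0`, i.e. the Rayleigh quotient `žᴴ G ž / ‖ž‖²` equals `ε` (the denominator
is positive because `r ≠ 0` forces `u ≠ 0`), and normalizing `ž` does not change that quotient. -/

namespace Matrix

variable {n : Type*} [Fintype n]

theorem star_dotProduct_self_eq_ofReal (u : n → ℂ) :
    star u ⬝ᵥ u = ((∑ i, ‖u i‖ ^ 2 : ℝ) : ℂ) := by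
  push_cast
  exact Finset.sum_congr rfl fun i _ => Complex.conj_mul' (u i)

theorem re_star_smul_dotProduct_mulVec_smul (A : Matrix n n ℂ) (x : n → ℂ) (t : ℝ) :
    (star (t • x) ⬝ᵥ A *ᵥ (t • x)).re = t ^ 2 * (star x ⬝ᵥ A *ᵥ x).re := by
  rw [star_smul, mulVec_smul, smul_dotProduct, dotProduct_smul, star_trivial, smul_smul,
    Complex.real_smul, Complex.re_ofReal_mul, sq]

theorem re_star_dotProduct_mulVec_normalize (A : Matrix n n ℂ) (x : n → ℂ) :
    (star ((√(star x ⬝ᵥ x).re)⁻¹ • x) ⬝ᵥ A *ᵥ ((√(star x ⬝ᵥ x).re)⁻¹ • x)).re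
      = (star x ⬝ᵥ A *ᵥ x).re / (star x ⬝ᵥ x).re := by
  have hnonneg : 0 ≤ (star x ⬝ᵥ x).re := (Complex.nonneg_iff.mp (dotProduct_star_self_nonneg x)).1
  rw [re_star_smul_dotProduct_mulVec_smul, inv_pow, Real.sq_sqrt hnonneg, inv_mul_eq_div]

variable [DecidableEq n]

theorem star_mulVec_dotProduct_mulVec {R : Type*} [CommSemiring R] [StarRing R]
    {Q : Matrix n n R} (hQ : Qᴴ * Q = 1) (a b : n → R) :
    star (Q *ᵥ a) ⬝ᵥ Q *ᵥ b = star a ⬝ᵥ b := by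
  rw [star_mulVec, ← dotProduct_mulVec, mulVec_mulVec, hQ, one_mulVec]

theorem conj_mulVec_mulVec {R : Type*} [Semiring R] [Star R] {Q : Matrix n n R} (hQ : Qᴴ * Q = 1)
    (M : Matrix n n R) (v : n → R) :
    (Q * M * Qᴴ) *ᵥ (Q *ᵥ v) = Q *ᵥ (M *ᵥ v) := by
  rw [mulVec_mulVec, Matrix.mul_assoc, hQ, Matrix.mul_one, ← mulVec_mulVec]

theorem mulVec_ne_zero_of_mul_eq_one {R : Type*} [Semiring R] {A B : Matrix n n R} (h : A * B = 1)
    {v : n → R} (hv : v ≠ 0) : B *ᵥ v ≠ 0 := fun hBv => hv <| by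
  rw [← one_mulVec v, ← h, ← mulVec_mulVec, hBv, mulVec_zero]

theorem star_dotProduct_diagonal_ofReal_mulVec (d : n → ℝ) (u : n → ℂ) :
    star u ⬝ᵥ diagonal (fun i => (d i : ℂ)) *ᵥ u = ((∑ i, d i * ‖u i‖ ^ 2 : ℝ) : ℂ) := by
  push_cast
  refine Finset.sum_congr rfl fun i _ => ?_
  rw [mulVec_diagonal, Pi.star_apply, Complex.star_def, ← Complex.conj_mul']
  ring

theorem inv_diagonal_add_smul_one_mulVec {K : Type*} [Field K] (d : n → K) (c : K)
    (h : ∀ i, d i + c ≠ 0) (v : n → K) :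
    (diagonal d + c • (1 : Matrix n n K))⁻¹ *ᵥ v = fun i => v i / (d i + c) := by
  have hinv : diagonal (fun i => (d i + c)⁻¹) * diagonal (fun i => d i + c) = 1 := by
    rw [diagonal_mul_diagonal, ← diagonal_one]
    exact congrArg diagonal (funext fun i => inv_mul_cancel₀ (h i))
  rw [smul_one_eq_diagonal, diagonal_add, inv_eq_left_inv hinv]
  ext i
  rw [mulVec_diagonal, inv_mul_eq_div]

end Matrix

theorem Finset.sum_mul_div_sum_eq_of_sum_sub_mul_eq_zero {ι K : Type*} [Field K] {s : Finset ι}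
    {a c : ι → K} {e : K} (h : ∑ i ∈ s, (a i - e) * c i = 0) (hc : ∑ i ∈ s, c i ≠ 0) :
    (∑ i ∈ s, a i * c i) / ∑ i ∈ s, c i = e := by
  simp only [sub_mul, Finset.sum_sub_distrib, ← Finset.mul_sum, sub_eq_zero] at h
  rw [div_eq_iff hc, h]

theorem kkt_normalized_meets_constraint_general (P : ℕ)
    (G : Matrix (Fin P) (Fin P) ℂ)
    (Q : Matrix (Fin P) (Fin P) ℂ)
    (hQ : Qᴴ * Q = 1) (hQ' : Q * Qᴴ = 1)
    (σ : Fin P → ℝ) (hσ : ∀ p, 0 ≤ σ p)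
    (hdec : G = Q * Matrix.diagonal (fun p => (σ p : ℂ)) * Qᴴ)
    (r : Fin P → ℂ) (hr : star r ⬝ᵥ r = 1)
    (ν : ℝ) (hν : 0 < ν) (ε : ℝ)
    (zc : Fin P → ℂ)
    (hzc : zc = (Q * (Matrix.diagonal (fun p => (σ p : ℂ)) + (ν : ℂ) • (1 : Matrix (Fin P) (Fin P) ℂ))⁻¹ * Qᴴ).mulVec r)
    (z : Fin P → ℂ)
    (hz : z = (Real.sqrt ((star zc ⬝ᵥ zc).re))⁻¹ • zc)
    (hroot : ∑ p, (σ p - ε) * ‖(Qᴴ.mulVec r) p‖ ^ 2 / (σ p + ν) ^ 2 = 0) :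
    (star z ⬝ᵥ G.mulVec z).re = ε := by
  set w := Qᴴ *ᵥ r
  set u : Fin P → ℂ := fun p => w p / (σ p + ν)
  have hden : ∀ p, (σ p : ℂ) + ν ≠ 0 := fun p => by
    exact_mod_cast (add_pos_of_nonneg_of_pos (hσ p) hν).ne'
  have hzc_eq : zc = Q *ᵥ u := by
    rw [hzc, ← mulVec_mulVec, ← mulVec_mulVec, inv_diagonal_add_smul_one_mulVec _ _ hden]
  have hu : u ≠ 0 := by
    have hw : w ≠ 0 := mulVec_ne_zero_of_mul_eq_one hQ' (by rintro rfl; simp at hr)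
    exact fun h0 => hw (funext fun p => by simpa [u, hden p] using congrFun h0 p)
  have hnorm : (star zc ⬝ᵥ zc).re = ∑ p, ‖u p‖ ^ 2 := by
    rw [hzc_eq, star_mulVec_dotProduct_mulVec hQ, star_dotProduct_self_eq_ofReal,
      Complex.ofReal_re]
  have hquad : (star zc ⬝ᵥ G *ᵥ zc).re = ∑ p, σ p * ‖u p‖ ^ 2 := by
    rw [hzc_eq, hdec, conj_mulVec_mulVec hQ, star_mulVec_dotProduct_mulVec hQ,
      star_dotProduct_diagonal_ofReal_mulVec, Complex.ofReal_re]
  have hpos : 0 < ∑ p, ‖u p‖ ^ 2 := by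
    have := dotProduct_star_self_pos_iff.mpr hu
    rwa [star_dotProduct_self_eq_ofReal, Complex.zero_lt_real] at this
  have hroot' : ∑ p, (σ p - ε) * ‖u p‖ ^ 2 = 0 := by
    rw [← hroot]
    refine Finset.sum_congr rfl fun p _ => ?_
    rw [norm_div, div_pow, mul_div_assoc, ← Complex.ofReal_add, Complex.norm_real,
      Real.norm_eq_abs, sq_abs]
  rw [hz, re_star_dotProduct_mulVec_normalize, hquad, hnorm]
  exact Finset.sum_mul_div_sum_eq_of_sum_sub_mul_eq_zero hroot' hpos.ne'

/-- KKT complementary slackness: if ν > 0 satisfies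
Σ_p (σ_p − ε)|q_pᴴ r|²/(σ_p + ν)² = 0, then the normalized vector
z = Q (Γ + νI)⁻¹ Qᴴ r / ‖·‖ meets the SI constraint with equality: zᴴ G z = ε. -/
theorem kkt_normalized_meets_constraint (P : ℕ)
    (G : Matrix (Fin P) (Fin P) ℂ) (hG : G.PosSemidef)
    (Q : Matrix (Fin P) (Fin P) ℂ)
    (hQ : Qᴴ * Q = 1) (hQ' : Q * Qᴴ = 1)
    (σ : Fin P → ℝ) (hσ : ∀ p, 0 ≤ σ p)
    (hdec : G = Q * Matrix.diagonal (fun p => (σ p : ℂ)) * Qᴴ)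
    (r : Fin P → ℂ) (hr : star r ⬝ᵥ r = 1)
    (ν : ℝ) (hν : 0 < ν) (ε : ℝ)
    (zc : Fin P → ℂ)
    (hzc : zc = (Q * (Matrix.diagonal (fun p => (σ p : ℂ)) + (ν : ℂ) • (1 : Matrix (Fin P) (Fin P) ℂ))⁻¹ * Qᴴ).mulVec r)
    (z : Fin P → ℂ)
    (hz : z = (Real.sqrt ((star zc ⬝ᵥ zc).re))⁻¹ • zc)
    (hroot : ∑ p, (σ p - ε) * ‖(Qᴴ.mulVec r) p‖ ^ 2 / (σ p + ν) ^ 2 = 0) :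
    (star z ⬝ᵥ G.mulVec z).re = ε :=
  kkt_normalized_meets_constraint_general P G Q hQ hQ' σ hσ hdec r hr ν hν ε zc hzc z hz hroot
end

section
/- Let G ∈ ℂ^(P×P) be Hermitian positive definite with spectral decomposition G = Q Γ Qᴴ and positive eigenvalues σ_1,…,σ_P, and r ∈ ℂ^P with ‖r‖₂ = 1. Define σ̄(r,G) = (Σ_p |q_pᴴ r|²/σ_p) / (Σ_p |q_pᴴ r|²/σ_p²). If σ̄(r,G) < ε < rᴴ G r, then the polynomial P(ν) = Σ_p (σ_p − ε)|q_pᴴ r|² Π_{q≠p}(σ_q + ν)² has a positive real root. -/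
open Matrix Filter Finset Topology

/-! With `c p = ‖(Qᴴ r) p‖²`, unitarity of `Q` and `‖r‖ = 1` give `∑ c = 1` and
`rᴴ G r = ∑ σ p * c p`. Divided by `ν ^ (2P - 2)`, the polynomial tends to
`∑ (σ p - ε) c p = rᴴ G r - ε > 0`, so it is positive for large `ν`, while its value at `0` is
`(∏ σ q ²) ∑ (σ p - ε) c p / σ p ²`, which is negative exactly when `ε > σ̄(r, G)`.
The intermediate value theorem gives the root. -/

section Conjugation

variable {𝕜 ι : Type*} [RCLike 𝕜] [Fintype ι]

lemma star_conjTranspose_mulVec_dotProduct (Q D : Matrix ι ι 𝕜) (r : ι → 𝕜) :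
    star (Qᴴ *ᵥ r) ⬝ᵥ D *ᵥ (Qᴴ *ᵥ r) = star r ⬝ᵥ (Q * D * Qᴴ) *ᵥ r := by
  rw [star_mulVec, ← dotProduct_mulVec, conjTranspose_conjTranspose, mulVec_mulVec,
    mulVec_mulVec, Matrix.mul_assoc]

lemma star_dotProduct_self_eq_sum_norm_sq (u : ι → 𝕜) :
    star u ⬝ᵥ u = ((∑ p, ‖u p‖ ^ 2 : ℝ) : 𝕜) := by
  simp [dotProduct, RCLike.conj_mul]

lemma star_dotProduct_diagonal_mulVec [DecidableEq ι] (σ : ι → ℝ) (u : ι → 𝕜) :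
    star u ⬝ᵥ diagonal (fun p => (σ p : 𝕜)) *ᵥ u = ((∑ p, σ p * ‖u p‖ ^ 2 : ℝ) : 𝕜) := by
  simp only [dotProduct, mulVec_diagonal, Pi.star_apply, RCLike.star_def]
  push_cast
  refine Finset.sum_congr rfl fun p _ => ?_
  rw [← RCLike.conj_mul]
  ring

end Conjugation

section KKTPoly

variable {ι : Type*} [Fintype ι] [DecidableEq ι]

def kktPoly (a σ : ι → ℝ) (ν : ℝ) : ℝ :=
  ∑ p, a p * ∏ q ∈ univ.erase p, (σ q + ν) ^ 2

variable (a σ : ι → ℝ)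

lemma continuous_kktPoly : Continuous (kktPoly a σ) := by
  unfold kktPoly
  fun_prop

lemma kktPoly_zero (hσ : ∀ p, σ p ≠ 0) :
    kktPoly a σ 0 = (∏ q, σ q ^ 2) * ∑ p, a p / σ p ^ 2 := by
  rw [kktPoly, mul_sum]
  refine Finset.sum_congr rfl fun p _ => ?_
  rw [← mul_prod_erase univ (fun q => σ q ^ 2) (mem_univ p)]
  simp only [add_zero]
  field_simp [hσ p]

lemma tendsto_kktPoly_div_pow :
    Tendsto (fun ν => kktPoly a σ ν / (ν ^ 2) ^ (Fintype.card ι - 1)) atTop (𝓝 (∑ p, a p)) := by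
  have hratio : ∀ q, Tendsto (fun ν : ℝ => (σ q + ν) / ν) atTop (𝓝 1) := fun q => by
    have := (tendsto_inv_atTop_zero.const_mul (σ q)).add_const (1 : ℝ)
    rw [mul_zero, zero_add] at this
    refine this.congr' ?_
    filter_upwards [eventually_ne_atTop 0] with ν hν
    field_simp
  have hlim : Tendsto (fun ν : ℝ => ∑ p, a p * ∏ q ∈ univ.erase p, ((σ q + ν) / ν) ^ 2)
      atTop (𝓝 (∑ p, a p * ∏ q ∈ univ.erase p, (1 : ℝ) ^ 2)) :=
    tendsto_finsetSum _ fun p _ =>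
      (tendsto_finsetProd _ fun q _ => (hratio q).pow 2).const_mul (a p)
  simp only [one_pow, prod_const_one, mul_one] at hlim
  refine hlim.congr fun ν => ?_
  rw [kktPoly, sum_div]
  refine Finset.sum_congr rfl fun p _ => ?_
  simp_rw [div_pow]
  rw [mul_div_assoc, prod_div_distrib, prod_const,
    card_erase_of_mem (mem_univ p), card_univ]

lemma eventually_kktPoly_pos (ha : 0 < ∑ p, a p) : ∀ᶠ ν in atTop, 0 < kktPoly a σ ν := by
  filter_upwards [(tendsto_kktPoly_div_pow a σ).eventually (eventually_gt_nhds ha),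
    eventually_gt_atTop 0] with ν hquot hν
  exact (div_pos_iff_of_pos_right (by positivity)).mp hquot

lemma exists_pos_kktPoly_eq_zero (hσ : ∀ p, 0 < σ p) (h0 : ∑ p, a p / σ p ^ 2 < 0)
    (ha : 0 < ∑ p, a p) : ∃ ν, 0 < ν ∧ kktPoly a σ ν = 0 := by
  obtain ⟨ν₁, hpos, hν₁⟩ := ((eventually_kktPoly_pos a σ ha).and (eventually_gt_atTop 0)).exists
  have hneg : kktPoly a σ 0 < 0 := by
    rw [kktPoly_zero a σ fun p => (hσ p).ne']
    exact mul_neg_of_pos_of_neg (prod_pos fun q _ => pow_pos (hσ q) 2) h0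
  obtain ⟨ν, ⟨hν, -⟩, hroot⟩ :=
    intermediate_value_Ioo hν₁.le (continuous_kktPoly a σ).continuousOn ⟨hneg, hpos⟩
  exact ⟨ν, hν, hroot⟩

end KKTPoly

lemma sum_sub_mul_div_sq_neg {ι : Type*} [Fintype ι] {c σ : ι → ℝ} {ε : ℝ}
    (hσ : ∀ p, 0 < σ p) (hc : 0 < ∑ p, c p / σ p ^ 2)
    (hε : (∑ p, c p / σ p) / (∑ p, c p / σ p ^ 2) < ε) :
    ∑ p, (σ p - ε) * c p / σ p ^ 2 < 0 := by
  have hsplit : ∑ p, (σ p - ε) * c p / σ p ^ 2 = ∑ p, c p / σ p - ε * ∑ p, c p / σ p ^ 2 := by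
    rw [mul_sum, ← sum_sub_distrib]
    refine Finset.sum_congr rfl fun p _ => ?_
    field_simp [(hσ p).ne']
  rw [hsplit]
  linarith [(div_lt_iff₀ hc).mp hε]

theorem kkt_polynomial_root_posdef_general (P : ℕ)
    (G : Matrix (Fin P) (Fin P) ℂ)
    (Q : Matrix (Fin P) (Fin P) ℂ)
    (hQ' : Q * Qᴴ = 1)
    (σ : Fin P → ℝ) (hσ : ∀ p, 0 < σ p)
    (hdec : G = Q * Matrix.diagonal (fun p => (σ p : ℂ)) * Qᴴ)
    (r : Fin P → ℂ) (hr : star r ⬝ᵥ r = 1)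
    (ε : ℝ)
    (hεlo : (∑ p, ‖(Qᴴ.mulVec r) p‖ ^ 2 / σ p) /
            (∑ p, ‖(Qᴴ.mulVec r) p‖ ^ 2 / (σ p) ^ 2) < ε)
    (hεhi : ε < (star r ⬝ᵥ G.mulVec r).re) :
    ∃ ν : ℝ, 0 < ν ∧
      ∑ p, (σ p - ε) * ‖(Qᴴ.mulVec r) p‖ ^ 2 *
        ∏ q ∈ Finset.univ.erase p, (σ q + ν) ^ 2 = 0 := by
  set c : Fin P → ℝ := fun p => ‖(Qᴴ *ᵥ r) p‖ ^ 2
  have hc_sum : ∑ p, c p = 1 := by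
    have h := star_conjTranspose_mulVec_dotProduct Q 1 r
    rw [one_mulVec, Matrix.mul_one, hQ', one_mulVec, hr,
      star_dotProduct_self_eq_sum_norm_sq, RCLike.ofReal_eq_complex_ofReal] at h
    exact_mod_cast h
  have hG : (star r ⬝ᵥ G *ᵥ r).re = ∑ p, σ p * c p := by
    have h := star_dotProduct_diagonal_mulVec σ (Qᴴ *ᵥ r)
    simp only [RCLike.ofReal_eq_complex_ofReal] at h
    rw [hdec, ← star_conjTranspose_mulVec_dotProduct, h, Complex.ofReal_re]
  have hc_pos : 0 < ∑ p, c p / σ p ^ 2 := by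
    obtain ⟨p, -, hp⟩ := exists_ne_zero_of_sum_ne_zero (hc_sum ▸ one_ne_zero)
    exact sum_pos' (fun p _ => by positivity) ⟨p, mem_univ p,
      div_pos ((sq_nonneg _).lt_of_ne' hp) (pow_pos (hσ p) 2)⟩
  refine exists_pos_kktPoly_eq_zero _ σ hσ ?_ ?_
  · simpa only [mul_div_right_comm] using sum_sub_mul_div_sq_neg hσ hc_pos hεlo
  · have hlead : ∑ p, (σ p - ε) * c p = ∑ p, σ p * c p - ε * ∑ p, c p := by
      simp only [sub_mul, sum_sub_distrib, mul_sum]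
    rw [hlead, hc_sum]
    linarith

/-- If G is positive definite (all eigenvalues σ_p > 0) and
σ̄(r,G) < ε < rᴴ G r, then the KKT polynomial
P(ν) = Σ_p (σ_p − ε)|q_pᴴ r|² Π_{q≠p}(σ_q + ν)² has a positive real root. -/
theorem kkt_polynomial_root_posdef (P : ℕ)
    (G : Matrix (Fin P) (Fin P) ℂ)
    (Q : Matrix (Fin P) (Fin P) ℂ)
    (hQ : Qᴴ * Q = 1) (hQ' : Q * Qᴴ = 1)
    (σ : Fin P → ℝ) (hσ : ∀ p, 0 < σ p)
    (hdec : G = Q * Matrix.diagonal (fun p => (σ p : ℂ)) * Qᴴ)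
    (r : Fin P → ℂ) (hr : star r ⬝ᵥ r = 1)
    (ε : ℝ)
    (hεlo : (∑ p, ‖(Qᴴ.mulVec r) p‖ ^ 2 / σ p) /
            (∑ p, ‖(Qᴴ.mulVec r) p‖ ^ 2 / (σ p) ^ 2) < ε)
    (hεhi : ε < (star r ⬝ᵥ G.mulVec r).re) :
    ∃ ν : ℝ, 0 < ν ∧
      ∑ p, (σ p - ε) * ‖(Qᴴ.mulVec r) p‖ ^ 2 *
        ∏ q ∈ Finset.univ.erase p, (σ q + ν) ^ 2 = 0 :=
  kkt_polynomial_root_posdef_general P G Q hQ' σ hσ hdec r hr ε hεlo hεhi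
end

section
/- Let S : [0,T_c] → ℂ^(M×N), x_1,…,x_L : [0,T] → ℂ bounded signals with total power P_tx = (1/T) Σ_ℓ ‖x_ℓ‖₂² and PAPRs ρ_ℓ = T ‖x_ℓ‖_∞²/‖x_ℓ‖₂², codebooks C ∈ ℂ^(M×K') and W ∈ ℂ^(N×L'), a beam mapping j : [L] → [L'], and m_S(C,W) = max_{k,ℓ} ∫₀^{T_c} |c_kᴴ S(t) w_ℓ| dt. Then for every k ∈ [K'], sup_t |Σ_{ℓ=1}^L ((c_kᴴ S w_{j(ℓ)}) ∗ x_ℓ)(t)|² ≤ m_S(C,W)² · P_tx · Σ_{ℓ=1}^L ρ_ℓ. -/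
/-!
Each beam pair contributes the convolution of the scalar impulse response `c_kᴴ S w` with
`x_ℓ`; by the L¹–L∞ Young bound its peak is at most `m_S ‖x_ℓ‖_∞`. Summing over `ℓ`, the peak
is at most `m_S Σ_ℓ ‖x_ℓ‖_∞`, and Cauchy–Schwarz with weights `‖x_ℓ‖₂² / T` turns
`(Σ_ℓ ‖x_ℓ‖_∞)²` into `P_tx Σ_ℓ ρ_ℓ`, since `‖x_ℓ‖_∞² = (‖x_ℓ‖₂² / T) ρ_ℓ`.
-/

open Matrix MeasureTheory

section YoungBound

variable {α E : Type*} [MeasurableSpace α] {μ : Measure α}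
  [NormedRing E] [NormedSpace ℝ E]

theorem norm_integral_mul_le_integral_norm_mul {f g : α → E} {B : ℝ}
    (hf : Integrable f μ) (hg : ∀ a, ‖g a‖ ≤ B) :
    ‖∫ a, f a * g a ∂μ‖ ≤ (∫ a, ‖f a‖ ∂μ) * B := by
  rw [← integral_mul_const]
  refine norm_integral_le_of_norm_le (hf.norm.mul_const B) (.of_forall fun a => ?_)
  calc ‖f a * g a‖ ≤ ‖f a‖ * ‖g a‖ := norm_mul_le _ _
    _ ≤ ‖f a‖ * B := by gcongr; exact hg a

theorem integral_eq_intervalIntegral_of_eq_zero_off_Icc {f : ℝ → E} {a b : ℝ} (hab : a ≤ b)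
    (hf : ∀ τ, τ ∉ Set.Icc a b → f τ = 0) :
    ∫ τ, f τ = ∫ τ in a..b, f τ := by
  rw [intervalIntegral.integral_of_le hab, ← integral_Icc_eq_integral_Ioc,
    setIntegral_eq_integral_of_forall_compl_eq_zero hf]

theorem norm_integral_mul_comp_sub_le {f g : ℝ → E} {a b B : ℝ} (hab : a ≤ b)
    (hf : Continuous f) (hf0 : ∀ τ, τ ∉ Set.Icc a b → f τ = 0) (hg : ∀ s, ‖g s‖ ≤ B) (t : ℝ) :
    ‖∫ τ, f τ * g (t - τ)‖ ≤ (∫ τ in a..b, ‖f τ‖) * B := by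
  have hf_int : Integrable f :=
    hf.integrable_of_hasCompactSupport (HasCompactSupport.intro isCompact_Icc hf0)
  rw [← integral_eq_intervalIntegral_of_eq_zero_off_Icc hab fun τ hτ => by simp [hf0 τ hτ]]
  exact norm_integral_mul_le_integral_norm_mul hf_int fun τ => hg (t - τ)

end YoungBound

theorem sq_sum_peak_le_power_mul_sum_papr {ι : Type*} (s : Finset ι) {T : ℝ} (hT : 0 < T)
    {Xpk e : ι → ℝ} (he : ∀ i ∈ s, 0 < e i) :
    (∑ i ∈ s, Xpk i) ^ 2 ≤ (1 / T * ∑ i ∈ s, e i) * ∑ i ∈ s, T * Xpk i ^ 2 / e i := by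
  rw [Finset.mul_sum s e]
  refine Finset.sum_sq_le_sum_mul_sum_of_sq_le_mul s (fun i hi => by positivity [he i hi])
    (fun i hi => by positivity [he i hi]) fun i hi => le_of_eq ?_
  field_simp [(he i hi).ne', hT.ne']

def beamResponse {m n : Type*} [Fintype m] [Fintype n] (S : ℝ → Matrix m n ℂ) (c : m → ℂ)
    (w : n → ℂ) (τ : ℝ) : ℂ :=
  star c ⬝ᵥ S τ *ᵥ w

theorem continuous_beamResponse {m n : Type*} [Fintype m] [Fintype n] {S : ℝ → Matrix m n ℂ}
    (hS : Continuous S) (c : m → ℂ) (w : n → ℂ) : Continuous (beamResponse S c w) := by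
  unfold beamResponse
  simp only [dotProduct, mulVec]
  fun_prop

/-- Key step of the quantization-noise bound (Lemma 1): the squared peak of the
beamformed self-interference signal is bounded by m_S(C,W)² · P_tx · Σ_ℓ ρ_ℓ. -/
theorem si_peak_power_bound (M N L K' L' : ℕ)
    (T Tc : ℝ) (hT : 0 < T) (hTc : 0 ≤ Tc)
    (S : ℝ → Matrix (Fin M) (Fin N) ℂ)
    (hScont : Continuous S)
    (hSsupp : ∀ t, t ∉ Set.Icc 0 Tc → S t = 0)
    (x : Fin L → ℝ → ℂ)
    (Xpk : Fin L → ℝ)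
    (hXpk : ∀ ℓ t, ‖x ℓ t‖ ≤ Xpk ℓ)
    (hx2pos : ∀ ℓ, 0 < ∫ t in (0:ℝ)..T, ‖x ℓ t‖ ^ 2)
    (ρ : Fin L → ℝ)
    (hρ : ∀ ℓ, ρ ℓ = T * (Xpk ℓ) ^ 2 / ∫ t in (0:ℝ)..T, ‖x ℓ t‖ ^ 2)
    (Ptx : ℝ)
    (hPtx : Ptx = (1 / T) * ∑ ℓ, ∫ t in (0:ℝ)..T, ‖x ℓ t‖ ^ 2)
    (C : Matrix (Fin M) (Fin K') ℂ) (W : Matrix (Fin N) (Fin L') ℂ)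
    (j : Fin L → Fin L')
    (mS : ℝ)
    (hmS : ∀ (k : Fin K') (ℓ : Fin L'),
      (∫ t in (0:ℝ)..Tc,
        ‖star (fun i => C i k) ⬝ᵥ (S t).mulVec (fun i => W i ℓ)‖) ≤ mS) :
    ∀ (k : Fin K') (t : ℝ),
      ‖∑ ℓ, ∫ τ : ℝ,
          (star (fun i => C i k) ⬝ᵥ (S τ).mulVec (fun i => W i (j ℓ))) * x ℓ (t - τ)‖ ^ 2 ≤
        mS ^ 2 * Ptx * ∑ ℓ, ρ ℓ := by
  intro k t
  have hterm : ∀ ℓ, ‖∫ τ : ℝ, beamResponse S (fun i => C i k) (fun i => W i (j ℓ)) τ *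
      x ℓ (t - τ)‖ ≤ mS * Xpk ℓ := fun ℓ =>
    (norm_integral_mul_comp_sub_le hTc (continuous_beamResponse hScont _ _)
      (fun τ hτ => by simp [beamResponse, hSsupp τ hτ]) (hXpk ℓ) t).trans
      (by gcongr; exacts [(norm_nonneg _).trans (hXpk ℓ 0), hmS k (j ℓ)])
  have hpeak : ‖∑ ℓ, ∫ τ : ℝ, beamResponse S (fun i => C i k) (fun i => W i (j ℓ)) τ *
      x ℓ (t - τ)‖ ≤ mS * ∑ ℓ, Xpk ℓ := by
    rw [Finset.mul_sum]
    exact (norm_sum_le _ _).trans (Finset.sum_le_sum fun ℓ _ => hterm ℓ)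
  have hCS : (∑ ℓ, Xpk ℓ) ^ 2 ≤ Ptx * ∑ ℓ, ρ ℓ := by
    simpa only [hPtx, hρ] using
      sq_sum_peak_le_power_mul_sum_papr Finset.univ hT fun ℓ _ => hx2pos ℓ
  calc _ ≤ (mS * ∑ ℓ, Xpk ℓ) ^ 2 := by gcongr; exact hpeak
    _ = mS ^ 2 * (∑ ℓ, Xpk ℓ) ^ 2 := mul_pow _ _ _
    _ ≤ mS ^ 2 * Ptx * ∑ ℓ, ρ ℓ := by rw [mul_assoc]; gcongr
end
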